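/- For t ∈ ℝ let G_{ij}(t) = u_i(t)·v_j(t) − u_j(t)·v_i(t) for 1 ≤ i < j ≤ 6, where u(t) = (−t, 0, t, 3, 2t, 3) and v(t) = (0, 1, t, 2, t, 1). Then for all integers a, b, c and all 1 ≤ i < j < k ≤ 6: if a·G_{jk}(√3) − b·G_{ik}(√3) + c·G_{ij}(√3) = 0, then a·G_{jk}(t) − b·G_{ik}(t) + c·G_{ij}(t) = 0 for every real t ≠ 0. -/

import Mathlib

/-- `u t = (-t, 0, t, 3, 2t, 3)`, the first basis vector of the plane `E_t` (12-fold family). -/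
noncomputable def u12 (t : ℝ) : Fin 6 → ℝ := ![-t, 0, t, 3, 2 * t, 3]

/-- `v t = (0, 1, t, 2, t, 1)`, the second basis vector of the plane `E_t` (12-fold family). -/
noncomputable def v12 (t : ℝ) : Fin 6 → ℝ := ![0, 1, t, 2, t, 1]

/-- Grassmann coordinates of `E_t`. -/
noncomputable def G12 (t : ℝ) (i j : Fin 6) : ℝ := u12 t i * v12 t j - u12 t j * v12 t i

/-!
Every coordinate of `u t` and `v t` is an integer times `t ^ w` with a weight `w ∈ {0, 1}`, so
`G_{ij}(t) = t ^ (w_i + w_j) g_{ij}` with `g_{ij} ∈ ℤ`. Pulling out `t ^ (w_i + w_j + w_k)`, the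
relation `a G_{jk} - b G_{ik} + c G_{ij}` becomes `t ^ (w_i + w_j + w_k) (α + β t⁻¹)` with integers
`α, β`. At `t = √3` the factor `α + β / √3` vanishes only if `α = β = 0`, because `1 / √3` is
irrational; then the relation vanishes for every `t ≠ 0`.
-/

theorem Irrational.intCast_add_intCast_mul_eq_zero {x : ℝ} (hx : Irrational x) {α β : ℤ}
    (h : α + β * x = 0) : α = 0 ∧ β = 0 := by
  obtain rfl : β = 0 := by
    by_contra hβ
    exact ((hx.intCast_mul hβ).intCast_add α).ne_zero h
  simpa using h

lemma pow_eq_intCast_add_intCast_mul {n : ℕ} (hn : n ≤ 1) (x : ℝ) :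
    x ^ n = ((1 - n : ℤ) : ℝ) + (n : ℤ) * x := by
  interval_cases n <;> simp

lemma int_mul_pow_sum_eq_zero_of_irrational {x : ℝ} (hx : Irrational x) {e₁ e₂ e₃ : ℕ}
    (he₁ : e₁ ≤ 1) (he₂ : e₂ ≤ 1) (he₃ : e₃ ≤ 1) {n₁ n₂ n₃ : ℤ}
    (h : n₁ * x ^ e₁ + n₂ * x ^ e₂ + n₃ * x ^ e₃ = 0) (y : ℝ) :
    n₁ * y ^ e₁ + n₂ * y ^ e₂ + n₃ * y ^ e₃ = 0 := by
  have affine : ∀ z : ℝ, (n₁ * z ^ e₁ + n₂ * z ^ e₂ + n₃ * z ^ e₃ : ℝ) =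
      ((n₁ * (1 - e₁) + n₂ * (1 - e₂) + n₃ * (1 - e₃) : ℤ) : ℝ) +
        ((n₁ * e₁ + n₂ * e₂ + n₃ * e₃ : ℤ) : ℝ) * z := by
    intro z
    simp only [pow_eq_intCast_add_intCast_mul he₁, pow_eq_intCast_add_intCast_mul he₂,
      pow_eq_intCast_add_intCast_mul he₃]
    push_cast
    ring
  rw [affine] at h ⊢
  obtain ⟨hα, hβ⟩ := hx.intCast_add_intCast_mul_eq_zero h
  simp [hα, hβ]

theorem triple_relation_persists {ι : Type*} {w : ι → ℕ} (hw : ∀ i, w i ≤ 1)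
    {G : ℝ → ι → ι → ℝ} {g : ι → ι → ℤ} (hG : ∀ t i j, G t i j = t ^ (w i + w j) * g i j)
    {x : ℝ} (hx : Irrational x) {a b c : ℤ} {i j k : ι}
    (h : a * G x j k - b * G x i k + c * G x i j = 0) {t : ℝ} (ht : t ≠ 0) :
    a * G t j k - b * G t i k + c * G t i j = 0 := by
  have factor : ∀ s : ℝ, s ≠ 0 → a * G s j k - b * G s i k + c * G s i j =
      s ^ (w i + w j + w k) * (((a * g j k : ℤ) : ℝ) * s⁻¹ ^ w i +
        ((-b * g i k : ℤ) : ℝ) * s⁻¹ ^ w j + ((c * g i j : ℤ) : ℝ) * s⁻¹ ^ w k) := by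
    intro s hs
    simp only [hG, inv_pow, pow_add]
    push_cast
    field_simp
    ring
  rw [factor x hx.ne_zero, mul_eq_zero] at h
  rw [factor t ht]
  exact mul_eq_zero_of_right _ <| int_mul_pow_sum_eq_zero_of_irrational hx.inv (hw i) (hw j) (hw k)
    (h.resolve_left (pow_ne_zero _ hx.ne_zero)) t⁻¹

def weight12 : Fin 6 → ℕ := ![1, 0, 1, 0, 1, 0]

lemma weight12_le_one (i : Fin 6) : weight12 i ≤ 1 := by
  fin_cases i <;> decide

def U12 : Fin 6 → ℤ := ![-1, 0, 1, 3, 2, 3]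

def V12 : Fin 6 → ℤ := ![0, 1, 1, 2, 1, 1]

lemma u12_eq (t : ℝ) (i : Fin 6) : u12 t i = t ^ weight12 i * U12 i := by
  fin_cases i <;> simp [u12, weight12, U12, mul_comm]

lemma v12_eq (t : ℝ) (i : Fin 6) : v12 t i = t ^ weight12 i * V12 i := by
  fin_cases i <;> simp [v12, weight12, V12]

lemma G12_eq (t : ℝ) (i j : Fin 6) :
    G12 t i j = t ^ (weight12 i + weight12 j) * (U12 i * V12 j - U12 j * V12 i : ℤ) := by
  simp only [G12, u12_eq, v12_eq, pow_add]
  push_cast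
  ring

theorem stmt_17_general (a b c : ℤ) (i j k : Fin 6)
    (h : (a : ℝ) * G12 (Real.sqrt 3) j k - (b : ℝ) * G12 (Real.sqrt 3) i k
        + (c : ℝ) * G12 (Real.sqrt 3) i j = 0) :
    ∀ t : ℝ, t ≠ 0 → (a : ℝ) * G12 t j k - (b : ℝ) * G12 t i k + (c : ℝ) * G12 t i j = 0 :=
  fun _ ht => triple_relation_persists weight12_le_one G12_eq
    Nat.prime_three.irrational_sqrt h ht

theorem stmt_17 (a b c : ℤ) (i j k : Fin 6) (hij : i < j) (hjk : j < k)
    (h : (a : ℝ) * G12 (Real.sqrt 3) j k - (b : ℝ) * G12 (Real.sqrt 3) i k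
        + (c : ℝ) * G12 (Real.sqrt 3) i j = 0) :
    ∀ t : ℝ, t ≠ 0 → (a : ℝ) * G12 t j k - (b : ℝ) * G12 t i k + (c : ℝ) * G12 t i j = 0 :=
  stmt_17_general a b c i j k h
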